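/- arXiv:2201.03394 — 4 statements merged into one kernel-verified Lean document; each statement's English description precedes it below -/
import Mathlib

section
/- Let N ≥ 1, let Ω ⊆ ℝ^N be open, and let u, v : ℝ^N → ℝ be differentiable at every point of Ω with u(x) > 0 for all x ∈ Ω. Let A be a symmetric positive semidefinite N×N real matrix. Then for every x ∈ Ω one has ⟨A ∇u(x), ∇(v²/u)(x)⟩ ≤ ⟨A ∇v(x), ∇v(x)⟩. Moreover, if A is positive definite, then equality holds at x if and only if v(x) ∇u(x)/u(x) = ∇v(x). -/
/-!
Put `t = v x / u x`. By the quotient rule `∇(v²/u) = 2t ∇v - t² ∇u`, and since `A` is symmetric,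
`⟨A∇v, ∇v⟩ - ⟨A∇u, ∇(v²/u)⟩ = ⟨Aw, w⟩` with `w = ∇v - t ∇u`. This is nonnegative when `A` is
positive semidefinite, and vanishes exactly when `w = 0` when `A` is positive definite.
-/

open RealInnerProductSpace

section Gradient

variable {F : Type*} [NormedAddCommGroup F] [InnerProductSpace ℝ F] [CompleteSpace F]
  {f g : F → ℝ} {f' g' x : F}

theorem HasGradientAt.mul (hf : HasGradientAt f f' x) (hg : HasGradientAt g g' x) :
    HasGradientAt (fun y => f y * g y) (f x • g' + g x • f') x := by
  rw [hasGradientAt_iff_hasFDerivAt, map_add, map_smul, map_smul]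
  exact hf.hasFDerivAt.mul hg.hasFDerivAt

theorem HasGradientAt.inv (hg : HasGradientAt g g' x) (hx : g x ≠ 0) :
    HasGradientAt (fun y => (g y)⁻¹) (-(g x ^ 2)⁻¹ • g') x := by
  rw [hasGradientAt_iff_hasFDerivAt, map_smul]
  exact (hasDerivAt_inv hx).comp_hasFDerivAt x hg.hasFDerivAt

theorem HasGradientAt.sq_div (hf : HasGradientAt f f' x) (hg : HasGradientAt g g' x)
    (hx : g x ≠ 0) :
    HasGradientAt (fun y => f y ^ 2 / g y)
      ((2 * (f x / g x)) • f' - (f x / g x) ^ 2 • g') x := by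
  have h := (hf.mul hf).mul (hg.inv hx)
  simp only [← sq, ← div_eq_mul_inv] at h
  convert h using 1
  match_scalars <;> field_simp
  ring

end Gradient

section QuadraticForm

variable {E : Type*} [NormedAddCommGroup E] [InnerProductSpace ℝ E] {T : E →ₗ[ℝ] E}

theorem LinearMap.IsSymmetric.picone_identity (hT : T.IsSymmetric) (a b : E) (t : ℝ) :
    ⟪T (b - t • a), b - t • a⟫ = ⟪T b, b⟫ - ⟪T a, (2 * t) • b - t ^ 2 • a⟫ := by
  have hba : ⟪T b, a⟫ = ⟪T a, b⟫ := by rw [hT, real_inner_comm]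
  simp only [map_sub, map_smul, inner_sub_left, inner_sub_right, real_inner_smul_left,
    real_inner_smul_right, hba]
  ring

theorem inner_map_self_eq_zero_iff_of_pos (hT : ∀ ξ : E, ξ ≠ 0 → 0 < ⟪T ξ, ξ⟫) (ξ : E) :
    ⟪T ξ, ξ⟫ = 0 ↔ ξ = 0 := by
  refine ⟨fun h => ?_, fun h => by rw [h, map_zero, inner_zero_left]⟩
  by_contra hξ
  exact (hT ξ hξ).ne' h

end QuadraticForm

theorem picone_inequality_general (N : ℕ) (Ω : Set (EuclideanSpace ℝ (Fin N)))
    (u v : EuclideanSpace ℝ (Fin N) → ℝ)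
    (hu : ∀ x ∈ Ω, DifferentiableAt ℝ u x)
    (hv : ∀ x ∈ Ω, DifferentiableAt ℝ v x)
    (hupos : ∀ x ∈ Ω, 0 < u x)
    (A : Matrix (Fin N) (Fin N) ℝ) (hA : A.IsSymm)
    (hpsd : ∀ ξ : EuclideanSpace ℝ (Fin N), 0 ≤ ⟪Matrix.toEuclideanLin A ξ, ξ⟫) :
    ∀ x ∈ Ω,
      ⟪Matrix.toEuclideanLin A (gradient u x),
          gradient (fun y => v y ^ 2 / u y) x⟫
        ≤ ⟪Matrix.toEuclideanLin A (gradient v x), gradient v x⟫ ∧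
      ((∀ ξ : EuclideanSpace ℝ (Fin N), ξ ≠ 0 → 0 < ⟪Matrix.toEuclideanLin A ξ, ξ⟫) →
        (⟪Matrix.toEuclideanLin A (gradient u x),
            gradient (fun y => v y ^ 2 / u y) x⟫
          = ⟪Matrix.toEuclideanLin A (gradient v x), gradient v x⟫
          ↔ (v x / u x) • gradient u x = gradient v x)) := by
  intro x hx
  set t := v x / u x
  have hT : (Matrix.toEuclideanLin A).IsSymmetric :=
    Matrix.isSymmetric_toEuclideanLin_iff.mpr (Matrix.isHermitian_iff_isSymm.mpr hA)
  have hgrad :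
      gradient (fun y => v y ^ 2 / u y) x = (2 * t) • gradient v x - t ^ 2 • gradient u x :=
    ((hv x hx).hasGradientAt.sq_div (hu x hx).hasGradientAt (hupos x hx).ne').gradient
  have key := hT.picone_identity (gradient u x) (gradient v x) t
  rw [hgrad]
  refine ⟨by linarith [hpsd (gradient v x - t • gradient u x)], fun hpd => ?_⟩
  rw [eq_comm, ← sub_eq_zero, ← key, inner_map_self_eq_zero_iff_of_pos hpd, sub_eq_zero, eq_comm]

/-- **Picone-type inequality** (Lemma A.1, second part).
Let `Ω ⊆ ℝ^N` be open and `u, v : ℝ^N → ℝ` differentiable on `Ω` with `u > 0` on `Ω`.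
Let `A` be a symmetric positive semidefinite `N × N` real matrix. Then for every `x ∈ Ω`
one has `⟨A ∇u(x), ∇(v²/u)(x)⟩ ≤ ⟨A ∇v(x), ∇v(x)⟩`; moreover, if `A` is positive definite,
then equality holds at `x` if and only if `v(x) ∇u(x)/u(x) = ∇v(x)`. -/
theorem picone_inequality (N : ℕ) (hN : 1 ≤ N) (Ω : Set (EuclideanSpace ℝ (Fin N)))
    (hΩ : IsOpen Ω) (u v : EuclideanSpace ℝ (Fin N) → ℝ)
    (hu : ∀ x ∈ Ω, DifferentiableAt ℝ u x)
    (hv : ∀ x ∈ Ω, DifferentiableAt ℝ v x)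
    (hupos : ∀ x ∈ Ω, 0 < u x)
    (A : Matrix (Fin N) (Fin N) ℝ) (hA : A.IsSymm)
    (hpsd : ∀ ξ : EuclideanSpace ℝ (Fin N), 0 ≤ ⟪Matrix.toEuclideanLin A ξ, ξ⟫) :
    ∀ x ∈ Ω,
      ⟪Matrix.toEuclideanLin A (gradient u x),
          gradient (fun y => v y ^ 2 / u y) x⟫
        ≤ ⟪Matrix.toEuclideanLin A (gradient v x), gradient v x⟫ ∧
      ((∀ ξ : EuclideanSpace ℝ (Fin N), ξ ≠ 0 → 0 < ⟪Matrix.toEuclideanLin A ξ, ξ⟫) →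
        (⟪Matrix.toEuclideanLin A (gradient u x),
            gradient (fun y => v y ^ 2 / u y) x⟫
          = ⟪Matrix.toEuclideanLin A (gradient v x), gradient v x⟫
          ↔ (v x / u x) • gradient u x = gradient v x)) :=
  picone_inequality_general N Ω u v hu hv hupos A hA hpsd
end

section
/- Let p > 2 be a real number. For every z, w ∈ ℝ^N one has ∫₀¹ |t z + (1 − t) w|^{p−2} dt ≥ 4^{−(p−1)} (|z| + |w|)^{p−2}. -/
/-! By the symmetry `t ↦ 1 - t` we may assume `‖w‖ ≤ ‖z‖`. On `[3/4, 1]` the point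
`t • z + (1 - t) • w` then has norm at least `3‖z‖/4 - ‖w‖/4 ≥ (‖z‖ + ‖w‖)/4`, so that interval
alone contributes `(1/4) ((‖z‖ + ‖w‖)/4)^q = 4^{-(q+1)} (‖z‖ + ‖w‖)^q` to the integral. -/

open MeasureTheory

section Segment

variable {E : Type*} [SeminormedAddCommGroup E] [NormedSpace ℝ E]

lemma add_norm_div_four_le_norm_smul_add_one_sub_smul {z w : E} (hwz : ‖w‖ ≤ ‖z‖) {t : ℝ}
    (ht : t ∈ Set.Icc (3 / 4 : ℝ) 1) : (‖z‖ + ‖w‖) / 4 ≤ ‖t • z + (1 - t) • w‖ := by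
  obtain ⟨ht₁, ht₂⟩ := ht
  calc (‖z‖ + ‖w‖) / 4 ≤ t * ‖z‖ - (1 - t) * ‖w‖ := by nlinarith [norm_nonneg w]
    _ = ‖t • z‖ - ‖(1 - t) • w‖ := by
      rw [norm_smul, norm_smul, Real.norm_of_nonneg (by linarith),
        Real.norm_of_nonneg (by linarith)]
    _ ≤ ‖t • z + (1 - t) • w‖ := norm_sub_le_norm_add _ _

lemma integral_comp_smul_add_one_sub_smul_comm {F : Type*} [NormedAddCommGroup F]
    [NormedSpace ℝ F] (g : E → F) (z w : E) :
    ∫ t in (0 : ℝ)..1, g (t • z + (1 - t) • w) = ∫ t in (0 : ℝ)..1, g (t • w + (1 - t) • z) := by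
  simpa [add_comm] using
    (intervalIntegral.integral_comp_sub_left (a := 0) (b := 1)
      (fun t => g (t • z + (1 - t) • w)) 1).symm

theorem four_rpow_neg_mul_add_norm_rpow_le_integral_of_norm_le {q : ℝ} (hq : 0 ≤ q) {z w : E}
    (hwz : ‖w‖ ≤ ‖z‖) :
    (4 : ℝ) ^ (-(q + 1)) * (‖z‖ + ‖w‖) ^ q ≤ ∫ t in (0 : ℝ)..1, ‖t • z + (1 - t) • w‖ ^ q := by
  have hcont : Continuous fun t : ℝ => ‖t • z + (1 - t) • w‖ ^ q :=
    (by fun_prop : Continuous fun t : ℝ => ‖t • z + (1 - t) • w‖).rpow_const fun _ => Or.inr hq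
  calc (4 : ℝ) ^ (-(q + 1)) * (‖z‖ + ‖w‖) ^ q
        = ∫ _ in (3 / 4 : ℝ)..1, ((‖z‖ + ‖w‖) / 4) ^ q := by
          rw [intervalIntegral.integral_const, smul_eq_mul,
            Real.div_rpow (by positivity) (by norm_num), Real.rpow_neg (by norm_num),
            Real.rpow_add_one (by norm_num)]
          field_simp
          ring
    _ ≤ ∫ t in (3 / 4 : ℝ)..1, ‖t • z + (1 - t) • w‖ ^ q :=
      intervalIntegral.integral_mono_on (by norm_num) intervalIntegrable_const
        (hcont.intervalIntegrable _ _) fun t ht =>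
          Real.rpow_le_rpow (by positivity)
            (add_norm_div_four_le_norm_smul_add_one_sub_smul hwz ht) hq
    _ ≤ ∫ t in (0 : ℝ)..1, ‖t • z + (1 - t) • w‖ ^ q :=
      intervalIntegral.integral_mono_interval (by norm_num) (by norm_num) le_rfl
        (Filter.Eventually.of_forall fun _ => by positivity) (hcont.intervalIntegrable _ _)

theorem four_rpow_neg_mul_add_norm_rpow_le_integral {q : ℝ} (hq : 0 ≤ q) (z w : E) :
    (4 : ℝ) ^ (-(q + 1)) * (‖z‖ + ‖w‖) ^ q ≤ ∫ t in (0 : ℝ)..1, ‖t • z + (1 - t) • w‖ ^ q := by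
  rcases le_total ‖w‖ ‖z‖ with hwz | hzw
  · exact four_rpow_neg_mul_add_norm_rpow_le_integral_of_norm_le hq hwz
  · rw [add_comm ‖z‖, integral_comp_smul_add_one_sub_smul_comm (‖·‖ ^ q)]
    exact four_rpow_neg_mul_add_norm_rpow_le_integral_of_norm_le hq hzw

end Segment

/-- **Lemma A.3.** Let `p > 2`. For every `z, w ∈ ℝ^N` one has
`∫₀¹ |t z + (1 − t) w|^{p−2} dt ≥ 4^{−(p−1)} (|z| + |w|)^{p−2}`. -/
theorem integral_segment_norm_rpow_lower_bound (N : ℕ) (p : ℝ) (hp : 2 < p)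
    (z w : EuclideanSpace ℝ (Fin N)) :
    (4 : ℝ) ^ (-(p - 1)) * (‖z‖ + ‖w‖) ^ (p - 2)
      ≤ ∫ t in (0:ℝ)..1, ‖t • z + (1 - t) • w‖ ^ (p - 2) := by
  have h := four_rpow_neg_mul_add_norm_rpow_le_integral (sub_nonneg.2 hp.le) z w
  rwa [show p - 2 + 1 = p - 1 by ring] at h
end

section
/- Let p > 2 be a real number. For every z, w ∈ ℝ^N, the matrix-valued map t ↦ D²H(t z + (1 − t) w) is Bochner integrable on [0,1] and |z|^{p−2} z − |w|^{p−2} w = (∫₀¹ D²H(t z + (1 − t) w) dt) (z − w). -/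
/-
Away from the origin `D²H(z)` is the derivative of `z ↦ |z|^{p−2} z`; at the origin this map
is `o(|z|)` because `p > 2`, so its derivative there is `0 = D²H(0)`. The bound
`‖D²H(z)‖ ≤ (p − 1)|z|^{p−2}` makes `D²H` continuous at the origin as well, and the identity
is the fundamental theorem of calculus along the segment from `w` to `z`.
-/

open MeasureTheory RealInnerProductSpace

/- For real `p`, the matrix `D²H(z) := |z|^{p−2} Id + (p−2) |z|^{p−4} z⊗z` for `z ≠ 0`,
and `D²H(0) := 0`, viewed as a continuous linear map on `ℝ^N`.
For `z ≠ 0` this is the Hessian of `H(z) = |z|^p / p`. -/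
open Classical in
noncomputable def D2H {N : ℕ} (p : ℝ) (z : EuclideanSpace ℝ (Fin N)) :
    EuclideanSpace ℝ (Fin N) →L[ℝ] EuclideanSpace ℝ (Fin N) :=
  if z = 0 then 0
  else ‖z‖ ^ (p - 2) • ContinuousLinearMap.id ℝ (EuclideanSpace ℝ (Fin N)) +
    ((p - 2) * ‖z‖ ^ (p - 4)) • (innerSL ℝ z).smulRight z

open Filter Topology Set Asymptotics

theorem sub_eq_integral_fderiv_segment_apply {E F : Type*} [NormedAddCommGroup E]
    [NormedSpace ℝ E] [NormedAddCommGroup F] [NormedSpace ℝ F] [CompleteSpace F]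
    {f : E → F} {f' : E → E →L[ℝ] F} (hf : ∀ x, HasFDerivAt f (f' x) x)
    (hf' : Continuous f') (z w : E) :
    f z - f w = (∫ t in Icc (0 : ℝ) 1, f' (t • z + (1 - t) • w)) (z - w) := by
  have hγ (t : ℝ) : t • z + (1 - t) • w = AffineMap.lineMap w z t := by
    rw [AffineMap.lineMap_apply_module, add_comm]
  have hcont : Continuous fun t : ℝ => f' (AffineMap.lineMap w z t) := hf'.comp (by fun_prop)
  have hftc := intervalIntegral.integral_eq_sub_of_hasDerivAt
    (fun t _ => (hf _).comp_hasDerivAt t (AffineMap.hasDerivAt_lineMap (a := w) (b := z)))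
    ((hcont.clm_apply continuous_const).intervalIntegrable 0 1)
  simp only [hγ]
  rw [ContinuousLinearMap.integral_apply hcont.integrableOn_Icc, integral_Icc_eq_integral_Ioc,
    ← intervalIntegral.integral_of_le zero_le_one, hftc]
  simp

theorem tendsto_norm_rpow_nhds_zero {E : Type*} [SeminormedAddCommGroup E] {q : ℝ}
    (hq : 0 < q) :
    Tendsto (fun x : E => ‖x‖ ^ q) (𝓝 0) (𝓝 0) := by
  simpa [Real.zero_rpow hq.ne'] using (continuous_norm.tendsto (0 : E)).rpow_const (.inr hq.le)

theorem hasFDerivAt_norm_rpow_smul_self_zero {E : Type*} [NormedAddCommGroup E] [NormedSpace ℝ E]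
    {q : ℝ} (hq : 0 < q) : HasFDerivAt (fun x : E => ‖x‖ ^ q • x) (0 : E →L[ℝ] E) 0 := by
  refine .of_isLittleO ?_
  simpa using ((isLittleO_one_iff ℝ).2 (tendsto_norm_rpow_nhds_zero (E := E) hq)).smul_isBigO
    (isBigO_refl (fun x : E => x) (𝓝 0))

theorem hasStrictFDerivAt_norm_rpow_of_ne_zero {E : Type*} [NormedAddCommGroup E]
    [InnerProductSpace ℝ E] {x : E} (hx : x ≠ 0) (q : ℝ) :
    HasStrictFDerivAt (fun x : E => ‖x‖ ^ q) ((q * ‖x‖ ^ (q - 2)) • innerSL ℝ x) x := by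
  convert! (hasStrictFDerivAt_norm_sq x).rpow_const (p := q / 2) (by simp [hx]) using 0
  simp_rw [← Real.rpow_natCast_mul (norm_nonneg _), ← Nat.cast_smul_eq_nsmul ℝ, smul_smul]
  ring_nf

section D2H

variable {N : ℕ} {p : ℝ}

@[simp]
theorem D2H_zero : D2H p (0 : EuclideanSpace ℝ (Fin N)) = 0 := by
  simp [D2H]

theorem D2H_of_ne_zero {z : EuclideanSpace ℝ (Fin N)} (hz : z ≠ 0) :
    D2H p z = ‖z‖ ^ (p - 2) • ContinuousLinearMap.id ℝ (EuclideanSpace ℝ (Fin N)) +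
      ((p - 2) * ‖z‖ ^ (p - 4)) • (innerSL ℝ z).smulRight z :=
  if_neg hz

theorem hasFDerivAt_D2H (hp : 2 < p) (z : EuclideanSpace ℝ (Fin N)) :
    HasFDerivAt (fun x => ‖x‖ ^ (p - 2) • x) (D2H p z) z := by
  rcases eq_or_ne z 0 with rfl | hz
  · simpa using
      hasFDerivAt_norm_rpow_smul_self_zero (E := EuclideanSpace ℝ (Fin N)) (sub_pos.2 hp)
  · refine ((hasStrictFDerivAt_norm_rpow_of_ne_zero hz (p - 2)).hasFDerivAt.smul
      (hasFDerivAt_id z)).congr_fderiv ?_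
    rw [D2H_of_ne_zero hz, show p - 2 - 2 = p - 4 by ring]
    ext x i
    simp [smul_smul]

theorem norm_D2H_le (hp : 2 ≤ p) (z : EuclideanSpace ℝ (Fin N)) :
    ‖D2H p z‖ ≤ (p - 1) * ‖z‖ ^ (p - 2) := by
  rcases eq_or_ne z 0 with rfl | hz
  · simpa using mul_nonneg (by linarith : (0 : ℝ) ≤ p - 1) (Real.rpow_nonneg le_rfl (p - 2))
  have hz' : 0 < ‖z‖ := norm_pos_iff.2 hz
  have hid : ‖‖z‖ ^ (p - 2) • ContinuousLinearMap.id ℝ (EuclideanSpace ℝ (Fin N))‖ ≤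
      ‖z‖ ^ (p - 2) := by
    rw [norm_smul, Real.norm_of_nonneg (by positivity)]
    exact mul_le_of_le_one_right (by positivity) ContinuousLinearMap.norm_id_le
  have hproj : ‖((p - 2) * ‖z‖ ^ (p - 4)) • (innerSL ℝ z).smulRight z‖ =
      (p - 2) * ‖z‖ ^ (p - 2) := by
    rw [norm_smul, ContinuousLinearMap.norm_smulRight_apply, innerSL_apply_norm,
      Real.norm_of_nonneg (mul_nonneg (by linarith) (by positivity)), mul_assoc, ← sq,
      ← Real.rpow_natCast, ← Real.rpow_add hz']
    congr 2
    ring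
  calc ‖D2H p z‖ ≤ ‖z‖ ^ (p - 2) + (p - 2) * ‖z‖ ^ (p - 2) := by
        rw [D2H_of_ne_zero hz]
        exact (norm_add_le _ _).trans (add_le_add hid hproj.le)
    _ = (p - 1) * ‖z‖ ^ (p - 2) := by ring

theorem continuous_D2H (hp : 2 < p) : Continuous (D2H (N := N) p) := by
  refine continuous_iff_continuousAt.2 fun z => ?_
  rcases eq_or_ne z 0 with rfl | hz
  · rw [ContinuousAt, D2H_zero]
    refine squeeze_zero_norm (norm_D2H_le hp.le) ?_
    simpa using (tendsto_norm_rpow_nhds_zero (E := EuclideanSpace ℝ (Fin N))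
      (sub_pos.2 hp)).const_mul (p - 1)
  · refine ContinuousAt.congr ?_
      (eventually_ne_nhds hz |>.mono fun x hx => (D2H_of_ne_zero hx).symm)
    have hnorm : ‖z‖ ≠ 0 := norm_ne_zero_iff.2 hz
    have hsmulRight :
        ContinuousAt (fun x : EuclideanSpace ℝ (Fin N) => (innerSL ℝ x).smulRight x) z :=
      (isBoundedBilinearMap_smulRight.continuous.comp
        ((innerSL ℝ).continuous.prodMk continuous_id)).continuousAt
    fun_prop (discharger := exact Or.inl hnorm)

end D2H

/-- **Equation (4.2).** Let `p > 2`. For every `z, w ∈ ℝ^N`, the map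
`t ↦ D²H(t z + (1 − t) w)` is Bochner integrable on `[0,1]` and
`|z|^{p−2} z − |w|^{p−2} w = (∫₀¹ D²H(t z + (1 − t) w) dt) (z − w)`. -/
theorem D2H_fundamental_theorem (N : ℕ) (p : ℝ) (hp : 2 < p)
    (z w : EuclideanSpace ℝ (Fin N)) :
    MeasureTheory.IntegrableOn (fun t : ℝ => D2H p (t • z + (1 - t) • w))
        (Set.Icc 0 1) volume ∧
    ‖z‖ ^ (p - 2) • z - ‖w‖ ^ (p - 2) • w
      = (∫ t in Set.Icc (0:ℝ) 1, D2H p (t • z + (1 - t) • w)) (z - w) :=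
  ⟨((continuous_D2H hp).comp (by fun_prop)).integrableOn_Icc,
    sub_eq_integral_fderiv_segment_apply (hasFDerivAt_D2H hp) (continuous_D2H hp) z w⟩
end

section
/- Let N ≥ 1 and let p > N be a real number. There exists a constant C > 0, depending only on N and p, such that for every real q with 1 ≤ q < ∞ and every smooth compactly supported function φ : ℝ^N → ℝ one has sup_{x ∈ ℝ^N} |φ(x)| ≤ C (∫_{ℝ^N} |∇φ|^p dx)^{1/p} + C (∫_{ℝ^N} |φ|^q dx)^{1/q}. In particular the constant C is independent of q. -/
set_option maxHeartbeats 1000000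

open MeasureTheory

lemma aux_seg_bound {N : ℕ} (φ : EuclideanSpace ℝ (Fin N) → ℝ) (hφ : ContDiff ℝ (⊤ : ℕ∞) φ)
    (x y : EuclideanSpace ℝ (Fin N)) (hy : ‖y - x‖ ≤ 1) :
    |φ x - φ y| ≤ ∫ t in Set.Ioc (0:ℝ) 1, ‖fderiv ℝ φ (x + t • (y - x))‖ := by
  set v := y - x with hv
  have hdiff : Differentiable ℝ φ := hφ.differentiable (by simp)
  have hline : ∀ t : ℝ, HasDerivAt (fun t : ℝ => x + t • v) v t := by
    intro t
    simpa using ((hasDerivAt_id t).smul_const v).const_add x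
  have hψ : ∀ t : ℝ, HasDerivAt (fun t : ℝ => φ (x + t • v))
      ((fderiv ℝ φ (x + t • v)) v) t := by
    intro t
    exact ((hdiff (x + t • v)).hasFDerivAt).comp_hasDerivAt t (hline t)
  have h1 : Continuous fun t : ℝ => x + t • v :=
    continuous_const.add (continuous_id.smul continuous_const)
  have hcont : Continuous fun t : ℝ => (fderiv ℝ φ (x + t • v)) v := by
    exact (((hφ.continuous_fderiv (by simp)).comp h1).clm_apply continuous_const)
  have hftc : ∫ t in (0:ℝ)..1, (fderiv ℝ φ (x + t • v)) v
      = φ (x + (1:ℝ) • v) - φ (x + (0:ℝ) • v) :=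
    intervalIntegral.integral_eq_sub_of_hasDerivAt (fun t _ => hψ t)
      (hcont.intervalIntegrable 0 1)
  have hend : φ (x + (1:ℝ) • v) - φ (x + (0:ℝ) • v) = φ y - φ x := by
    simp [hv]
  rw [abs_sub_comm]
  calc |φ y - φ x| = |∫ t in (0:ℝ)..1, (fderiv ℝ φ (x + t • v)) v| := by
        rw [hftc, hend]
    _ ≤ ∫ t in (0:ℝ)..1, ‖(fderiv ℝ φ (x + t • v)) v‖ := by
        simpa [Real.norm_eq_abs] using
          intervalIntegral.norm_integral_le_integral_norm
            (f := fun t : ℝ => (fderiv ℝ φ (x + t • v)) v) (μ := volume) zero_le_one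
    _ ≤ ∫ t in (0:ℝ)..1, ‖fderiv ℝ φ (x + t • v)‖ := by
        apply intervalIntegral.integral_mono_on zero_le_one
          (hcont.norm.intervalIntegrable 0 1)
          (((hφ.continuous_fderiv (by simp)).comp h1).norm.intervalIntegrable 0 1)
        intro t _
        calc ‖(fderiv ℝ φ (x + t • v)) v‖ ≤ ‖fderiv ℝ φ (x + t • v)‖ * ‖v‖ :=
              ContinuousLinearMap.le_opNorm _ _
          _ ≤ ‖fderiv ℝ φ (x + t • v)‖ * 1 := by
              exact mul_le_mul_of_nonneg_left hy (norm_nonneg _)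
          _ = ‖fderiv ℝ φ (x + t • v)‖ := mul_one _
    _ = ∫ t in Set.Ioc (0:ℝ) 1, ‖fderiv ℝ φ (x + t • v)‖ :=
        intervalIntegral.integral_of_le zero_le_one

lemma aux_shift_ball {N : ℕ} (f : EuclideanSpace ℝ (Fin N) → ℝ) (x : EuclideanSpace ℝ (Fin N)) :
    ∫ y in Metric.ball x 1, f (y - x) = ∫ w in Metric.ball (0 : EuclideanSpace ℝ (Fin N)) 1, f w := by
  rw [← integral_indicator measurableSet_ball, ← integral_indicator measurableSet_ball]
  rw [← integral_add_left_eq_self (μ := volume)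
    (Set.indicator (Metric.ball x 1) (fun y => f (y - x))) x]
  congr 1
  ext w
  by_cases hw : w ∈ Metric.ball (0 : EuclideanSpace ℝ (Fin N)) 1
  · have hxw : x + w ∈ Metric.ball x 1 := by
      simpa [Metric.mem_ball, dist_eq_norm] using hw
    simp [Set.indicator_of_mem hxw, Set.indicator_of_mem hw]
  · have hxw : x + w ∉ Metric.ball x 1 := by
      simpa [Metric.mem_ball, dist_eq_norm] using hw
    simp [Set.indicator_of_notMem hxw, Set.indicator_of_notMem hw]

lemma aux_inner_bound {N : ℕ} (hN : 1 ≤ N) {p : ℝ} (hp : (N : ℝ) < p)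
    (g : EuclideanSpace ℝ (Fin N) → ℝ) (hg_cont : Continuous g)
    (hg_supp : HasCompactSupport g) (hg0 : ∀ z, 0 ≤ g z)
    (x : EuclideanSpace ℝ (Fin N)) {t : ℝ} (ht : t ∈ Set.Ioc (0:ℝ) 1)
    (hshift : ∫ y in Metric.ball x 1, g (x + t • (y - x))
      = ∫ w in Metric.ball (0 : EuclideanSpace ℝ (Fin N)) 1, g (x + t • w)) :
    ∫ y in Metric.ball x 1, g (x + t • (y - x))
      ≤ (volume (Metric.ball (0 : EuclideanSpace ℝ (Fin N)) 1)).toReal ^ (1 - 1/p)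
        * (∫ z, g z ^ p) ^ (1/p) * t ^ (-((N:ℝ)/p)) := by
  have hp1 : (1:ℝ) < p := lt_of_le_of_lt (by exact_mod_cast hN) hp
  have hp0 : 0 < p := lt_trans one_pos hp1
  have ht0 : 0 < t := ht.1
  set B0 := Metric.ball (0 : EuclideanSpace ℝ (Fin N)) 1 with hB0
  set ω := (volume B0).toReal with hω
  haveI : IsFiniteMeasure (volume.restrict B0) :=
    ⟨by simpa [Measure.restrict_apply_univ] using measure_ball_lt_top⟩
  set Gt := fun w : EuclideanSpace ℝ (Fin N) => g (x + t • w) with hGt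
  have hGt_cont : Continuous Gt :=
    hg_cont.comp (continuous_const.add (continuous_id.const_smul t))
  have hhomeo : HasCompactSupport Gt := by
    have : Gt = g ∘ ((Homeomorph.smulOfNeZero t ht0.ne').trans
        (Homeomorph.addLeft x)) := rfl
    rw [this]
    exact hg_supp.comp_homeomorph _
  have hGt0 : ∀ w, 0 ≤ Gt w := fun w => hg0 _
  have hGtp_cont : Continuous fun w => Gt w ^ p :=
    hGt_cont.rpow_const (fun w => Or.inr hp0.le)
  have hGtp_supp : HasCompactSupport fun w => Gt w ^ p := by
    have : (fun w => Gt w ^ p) = (fun s : ℝ => s ^ p) ∘ Gt := rfl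
    rw [this]
    exact hhomeo.comp_left (Real.zero_rpow hp0.ne')
  have hGtp_int : Integrable fun w => Gt w ^ p :=
    hGtp_cont.integrable_of_hasCompactSupport hGtp_supp
  -- Hölder
  have hpq : p.HolderConjugate (Real.conjExponent p) :=
    Real.HolderConjugate.conjExponent hp1
  have hGt_mem : MemLp Gt (ENNReal.ofReal p) (volume.restrict B0) :=
    (hGt_cont.memLp_of_hasCompactSupport hhomeo).restrict B0
  have hone_mem : MemLp (fun _ : EuclideanSpace ℝ (Fin N) => (1:ℝ))
      (ENNReal.ofReal (Real.conjExponent p)) (volume.restrict B0) := memLp_const 1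
  have hHolder := integral_mul_le_Lp_mul_Lq_of_nonneg (μ := volume.restrict B0) hpq
    (Filter.Eventually.of_forall hGt0) (Filter.Eventually.of_forall fun _ => zero_le_one)
    hGt_mem hone_mem
  have hone_int : (∫ w in B0, (1:ℝ) ^ Real.conjExponent p) = ω := by
    simp [Real.one_rpow, measureReal_def, hω]
  -- scaling
  have hscale : (∫ w, Gt w ^ p) = (t ^ N)⁻¹ * ∫ z, g z ^ p := by
    have h1 : (∫ w, Gt w ^ p)
        = ∫ w, (fun u => g (x + u) ^ p) (t • w) := rfl
    rw [h1, Measure.integral_comp_smul_of_nonneg (μ := volume)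
      (fun u => g (x + u) ^ p) t (hR := ht0.le)]
    rw [finrank_euclideanSpace_fin]
    rw [integral_add_left_eq_self (μ := volume) (fun u => g u ^ p) x]
    simp [smul_eq_mul]
  have hsetle : (∫ w in B0, Gt w ^ p) ≤ (t ^ N)⁻¹ * ∫ z, g z ^ p := by
    rw [← hscale]
    exact setIntegral_le_integral hGtp_int
      (Filter.Eventually.of_forall fun w => Real.rpow_nonneg (hGt0 w) p)
  have hS0 : 0 ≤ ∫ z, g z ^ p :=
    integral_nonneg fun z => Real.rpow_nonneg (hg0 z) p
  have hconj : 1 / Real.conjExponent p = 1 - 1/p := by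
    have := hpq.inv_add_inv_eq_one
    rw [one_div, one_div]
    linarith
  calc ∫ y in Metric.ball x 1, g (x + t • (y - x))
      = ∫ w in B0, Gt w := hshift
    _ = ∫ w in B0, Gt w * 1 := by simp
    _ ≤ (∫ w in B0, Gt w ^ p) ^ (1/p) * (∫ w in B0, (1:ℝ) ^ Real.conjExponent p) ^ (1 / Real.conjExponent p) := hHolder
    _ ≤ ((t ^ N)⁻¹ * ∫ z, g z ^ p) ^ (1/p) * ω ^ (1 - 1/p) := by
        rw [hone_int, hconj]
        gcongr
        exact integral_nonneg fun w => Real.rpow_nonneg (hGt0 w) p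
    _ = ω ^ (1 - 1/p) * (∫ z, g z ^ p) ^ (1/p) * t ^ (-((N:ℝ)/p)) := by
        rw [Real.mul_rpow (by positivity) hS0]
        have hti : ((t ^ N)⁻¹ : ℝ) ^ (1/p) = t ^ (-((N:ℝ)/p)) := by
          rw [← Real.rpow_natCast t N, ← Real.rpow_neg ht0.le,
            ← Real.rpow_mul ht0.le]
          ring_nf
        rw [hti]; ring

lemma aux_rpow_le_max {ω s : ℝ} (hω : 0 < ω) (hs0 : 0 ≤ s) (hs1 : s ≤ 1) :
    ω ^ s ≤ max 1 ω := by
  rcases le_or_gt ω 1 with h | h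
  · exact le_trans (Real.rpow_le_one hω.le h hs0) (le_max_left _ _)
  · calc ω ^ s ≤ ω ^ (1:ℝ) := Real.rpow_le_rpow_of_exponent_le h.le hs1
      _ = ω := Real.rpow_one ω
      _ ≤ max 1 ω := le_max_right _ _

lemma aux_qterm {N : ℕ} {q : ℝ} (hq : 1 ≤ q) (φ : EuclideanSpace ℝ (Fin N) → ℝ)
    (hφ_cont : Continuous φ) (hφc : HasCompactSupport φ) (x : EuclideanSpace ℝ (Fin N)) :
    ∫ y in Metric.ball x 1, |φ y|
      ≤ max 1 (volume (Metric.ball (0 : EuclideanSpace ℝ (Fin N)) 1)).toReal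
        * (∫ y, |φ y| ^ q) ^ (1/q) := by
  have hq0 : 0 < q := lt_of_lt_of_le one_pos hq
  set ω := (volume (Metric.ball (0 : EuclideanSpace ℝ (Fin N)) 1)).toReal with hω
  have hω_pos : 0 < ω := by
    refine ENNReal.toReal_pos ?_ measure_ball_lt_top.ne
    exact (Metric.measure_ball_pos volume _ one_pos).ne'
  have habs_cont : Continuous fun y => |φ y| := hφ_cont.abs
  have habs_supp : HasCompactSupport fun y => |φ y| := by
    have : (fun y => |φ y|) = (fun s : ℝ => |s|) ∘ φ := rfl
    rw [this]; exact hφc.comp_left abs_zero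
  have habs_int : Integrable fun y => |φ y| :=
    habs_cont.integrable_of_hasCompactSupport habs_supp
  have hq_cont : Continuous fun y => |φ y| ^ q :=
    habs_cont.rpow_const fun y => Or.inr hq0.le
  have hq_supp : HasCompactSupport fun y => |φ y| ^ q := by
    have : (fun y => |φ y| ^ q) = (fun s : ℝ => s ^ q) ∘ (fun y => |φ y|) := rfl
    rw [this]; exact habs_supp.comp_left (Real.zero_rpow hq0.ne')
  have hq_int : Integrable fun y => |φ y| ^ q :=
    hq_cont.integrable_of_hasCompactSupport hq_supp
  have hsetle : (∫ y in Metric.ball x 1, |φ y| ^ q) ≤ ∫ y, |φ y| ^ q :=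
    setIntegral_le_integral hq_int
      (Filter.Eventually.of_forall fun y => Real.rpow_nonneg (abs_nonneg _) q)
  have hSq0 : 0 ≤ ∫ y, |φ y| ^ q :=
    integral_nonneg fun y => Real.rpow_nonneg (abs_nonneg _) q
  haveI : IsFiniteMeasure (volume.restrict (Metric.ball x 1)) :=
    ⟨by simpa [Measure.restrict_apply_univ] using measure_ball_lt_top⟩
  have hvol : (volume (Metric.ball x 1)).toReal = ω := by
    rw [hω, Measure.addHaar_ball_center]
  rcases eq_or_lt_of_le hq with rfl | hq1
  · have h1 : (∫ y in Metric.ball x 1, |φ y|) ≤ ∫ y, |φ y| :=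
      setIntegral_le_integral habs_int
        (Filter.Eventually.of_forall fun y => abs_nonneg _)
    have h2 : (∫ y, |φ y| ^ (1:ℝ)) ^ (1/(1:ℝ)) = ∫ y, |φ y| := by
      simp [Real.rpow_one]
    rw [h2]
    calc (∫ y in Metric.ball x 1, |φ y|) ≤ ∫ y, |φ y| := h1
      _ ≤ max 1 ω * ∫ y, |φ y| := by
          refine le_mul_of_one_le_left (integral_nonneg fun y => abs_nonneg _) (le_max_left _ _)
  · -- Hölder with exponents q, q'
    have hpq : q.HolderConjugate (Real.conjExponent q) :=
      Real.HolderConjugate.conjExponent hq1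
    have hmem : MemLp (fun y => |φ y|) (ENNReal.ofReal q) (volume.restrict (Metric.ball x 1)) :=
      (habs_cont.memLp_of_hasCompactSupport habs_supp).restrict _
    have hone_mem : MemLp (fun _ : EuclideanSpace ℝ (Fin N) => (1:ℝ))
        (ENNReal.ofReal (Real.conjExponent q)) (volume.restrict (Metric.ball x 1)) :=
      memLp_const 1
    have hHolder := integral_mul_le_Lp_mul_Lq_of_nonneg (μ := volume.restrict (Metric.ball x 1))
      hpq (Filter.Eventually.of_forall fun y => abs_nonneg _)
      (Filter.Eventually.of_forall fun _ => zero_le_one) hmem hone_mem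
    have hone_int : (∫ _ in Metric.ball x 1, (1:ℝ) ^ Real.conjExponent q) = ω := by
      simp [Real.one_rpow, measureReal_def, hvol]
    have hconj : 1 / Real.conjExponent q = 1 - 1/q := by
      have := hpq.inv_add_inv_eq_one
      rw [one_div, one_div]; linarith
    calc (∫ y in Metric.ball x 1, |φ y|)
        = ∫ y in Metric.ball x 1, |φ y| * 1 := by simp
      _ ≤ (∫ y in Metric.ball x 1, |φ y| ^ q) ^ (1/q)
          * (∫ _ in Metric.ball x 1, (1:ℝ) ^ Real.conjExponent q) ^ (1 / Real.conjExponent q) :=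
          hHolder
      _ ≤ (∫ y, |φ y| ^ q) ^ (1/q) * max 1 ω := by
          rw [hone_int, hconj]
          have h1 : (∫ y in Metric.ball x 1, |φ y| ^ q) ^ (1/q) ≤ (∫ y, |φ y| ^ q) ^ (1/q) :=
            Real.rpow_le_rpow (integral_nonneg fun y => Real.rpow_nonneg (abs_nonneg _) q)
              hsetle (by positivity)
          have h2 : ω ^ (1 - 1/q) ≤ max 1 ω :=
            aux_rpow_le_max hω_pos (by
              have : 1/q ≤ 1 := by
                rw [div_le_one hq0]; exact hq
              linarith) (by
              have h0q : 0 ≤ 1/q := by positivity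
              linarith)
          exact mul_le_mul h1 h2 (by positivity) (Real.rpow_nonneg hSq0 _)
      _ = max 1 ω * (∫ y, |φ y| ^ q) ^ (1/q) := mul_comm _ _

lemma aux_gradterm {N : ℕ} (hN : 1 ≤ N) {p : ℝ} (hp : (N : ℝ) < p)
    (φ : EuclideanSpace ℝ (Fin N) → ℝ) (hφ : ContDiff ℝ (⊤ : ℕ∞) φ) (hφc : HasCompactSupport φ)
    (x : EuclideanSpace ℝ (Fin N)) :
    ∫ y in Metric.ball x 1, |φ x - φ y|
      ≤ (volume (Metric.ball (0 : EuclideanSpace ℝ (Fin N)) 1)).toReal ^ (1 - 1/p)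
        * (∫ z, ‖fderiv ℝ φ z‖ ^ p) ^ (1/p) * (p / (p - N)) := by
  have hp1 : (1:ℝ) < p := lt_of_le_of_lt (by exact_mod_cast hN) hp
  have hp0 : 0 < p := lt_trans one_pos hp1
  set g : EuclideanSpace ℝ (Fin N) → ℝ := fun z => ‖fderiv ℝ φ z‖ with hg
  have hg_cont : Continuous g := (hφ.continuous_fderiv (by simp)).norm
  have hg_supp : HasCompactSupport g := (hφc.fderiv ℝ).norm
  have hg0 : ∀ z, 0 ≤ g z := fun z => norm_nonneg _
  set B := Metric.ball x 1 with hB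
  set ν := volume.restrict (Set.Ioc (0:ℝ) 1) with hν
  set μB := volume.restrict B with hμB
  haveI : IsFiniteMeasure μB := ⟨by simpa [hμB, Measure.restrict_apply_univ] using measure_ball_lt_top⟩
  haveI : IsFiniteMeasure ν := ⟨by
    simp [hν, Measure.restrict_apply_univ]⟩
  set ω := (volume (Metric.ball (0 : EuclideanSpace ℝ (Fin N)) 1)).toReal with hω
  have hω0 : 0 ≤ ω := ENNReal.toReal_nonneg
  set S := ∫ z, g z ^ p with hS
  have hS0 : 0 ≤ S := integral_nonneg fun z => Real.rpow_nonneg (hg0 z) p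
  set A := S ^ (1/p) with hA
  have hA0 : 0 ≤ A := Real.rpow_nonneg hS0 _
  -- integrability of the kernel on the product
  obtain ⟨M, hM⟩ := hg_supp.exists_bound_of_continuous hg_cont
  have hFc : Continuous fun yt : EuclideanSpace ℝ (Fin N) × ℝ => g (x + yt.2 • (yt.1 - x)) := by
    exact hg_cont.comp (continuous_const.add ((continuous_snd).smul (continuous_fst.sub continuous_const)))
  have hF_int : Integrable (fun yt : EuclideanSpace ℝ (Fin N) × ℝ => g (x + yt.2 • (yt.1 - x)))
      (μB.prod ν) := by
    refine Integrable.mono' (integrable_const M) hFc.aestronglyMeasurable ?_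
    exact Filter.Eventually.of_forall fun yt => hM _
  have hh_int : Integrable (fun y => ∫ t, g (x + t • (y - x)) ∂ν) μB :=
    hF_int.integral_prod_left
  -- pointwise bound on B
  have hptwise : ∀ y ∈ B, |φ x - φ y| ≤ ∫ t, g (x + t • (y - x)) ∂ν := by
    intro y hy
    have : ‖y - x‖ ≤ 1 := by
      rw [Metric.mem_ball, dist_eq_norm] at hy
      exact hy.le
    exact aux_seg_bound φ hφ x y this
  have hstep1 : (∫ y in B, |φ x - φ y|) ≤ ∫ y, (∫ t, g (x + t • (y - x)) ∂ν) ∂μB := by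
    refine integral_mono_of_nonneg (Filter.Eventually.of_forall fun y => abs_nonneg _) hh_int ?_
    exact (ae_restrict_iff' measurableSet_ball).2 (Filter.Eventually.of_forall hptwise)
  -- swap
  have hswap : (∫ y, (∫ t, g (x + t • (y - x)) ∂ν) ∂μB)
      = ∫ t, (∫ y, g (x + t • (y - x)) ∂μB) ∂ν :=
    integral_integral_swap (f := fun y t => g (x + t • (y - x))) hF_int
  -- bound the inner integral for each t and integrate
  have hk_int : Integrable (fun t : ℝ => ω ^ (1 - 1/p) * S ^ (1/p) * t ^ (-((N:ℝ)/p))) ν := by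
    have hr : (-1:ℝ) < -((N:ℝ)/p) := by
      have : (N:ℝ)/p < 1 := (div_lt_one hp0).2 hp
      linarith
    have := intervalIntegral.intervalIntegrable_rpow' (a := 0) (b := 1) hr
    rw [intervalIntegrable_iff_integrableOn_Ioc_of_le zero_le_one] at this
    exact (this.const_mul _)
  have hstep2 : (∫ t, (∫ y, g (x + t • (y - x)) ∂μB) ∂ν)
      ≤ ∫ t, ω ^ (1 - 1/p) * S ^ (1/p) * t ^ (-((N:ℝ)/p)) ∂ν := by
    refine integral_mono_of_nonneg ?_ hk_int ?_
    · exact Filter.Eventually.of_forall fun t =>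
        integral_nonneg fun y => hg0 _
    · refine (ae_restrict_iff' measurableSet_Ioc).2 (Filter.Eventually.of_forall ?_)
      intro t ht
      have hshift : (∫ y in Metric.ball x 1, g (x + t • (y - x)))
          = ∫ w in Metric.ball (0 : EuclideanSpace ℝ (Fin N)) 1, g (x + t • w) :=
        aux_shift_ball (fun w => g (x + t • w)) x
      simpa [hμB, hB, hω, hS] using aux_inner_bound hN hp g hg_cont hg_supp hg0 x ht hshift
  -- compute the t-integral
  have hval : (∫ t, ω ^ (1 - 1/p) * S ^ (1/p) * t ^ (-((N:ℝ)/p)) ∂ν)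
      = ω ^ (1 - 1/p) * S ^ (1/p) * (p / (p - N)) := by
    rw [integral_const_mul]
    congr 1
    have hr : (-1:ℝ) < -((N:ℝ)/p) := by
      have : (N:ℝ)/p < 1 := (div_lt_one hp0).2 hp
      linarith
    rw [← intervalIntegral.integral_of_le zero_le_one,
      integral_rpow (Or.inl hr)]
    have h1 : -((N:ℝ)/p) + 1 = (p - N)/p := by field_simp; ring
    have hpN : (0:ℝ) < p - N := by linarith
    have hne : ((p - N)/p : ℝ) ≠ 0 := (div_pos hpN hp0).ne'
    rw [h1, Real.one_rpow, Real.zero_rpow hne, sub_zero, one_div_div]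
  calc (∫ y in B, |φ x - φ y|)
      ≤ ∫ y, (∫ t, g (x + t • (y - x)) ∂ν) ∂μB := hstep1
    _ = ∫ t, (∫ y, g (x + t • (y - x)) ∂μB) ∂ν := hswap
    _ ≤ ∫ t, ω ^ (1 - 1/p) * S ^ (1/p) * t ^ (-((N:ℝ)/p)) ∂ν := hstep2
    _ = ω ^ (1 - 1/p) * S ^ (1/p) * (p / (p - N)) := hval

/-- **Estimate (B.2).** Let `p > N ≥ 1`. There exists `C = C(N, p) > 0`, independent of `q`,
such that for every `1 ≤ q < ∞` and every `φ ∈ C_c^∞(ℝ^N)`,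
`‖φ‖_∞ ≤ C (∫ |∇φ|^p)^{1/p} + C (∫ |φ|^q)^{1/q}`. -/
theorem morrey_additive_uniform_in_q (N : ℕ) (hN : 1 ≤ N) (p : ℝ) (hp : (N : ℝ) < p) :
    ∃ C : ℝ, 0 < C ∧ ∀ q : ℝ, 1 ≤ q →
      ∀ φ : EuclideanSpace ℝ (Fin N) → ℝ, ContDiff ℝ (⊤ : ℕ∞) φ → HasCompactSupport φ →
        ∀ x : EuclideanSpace ℝ (Fin N),
          |φ x| ≤ C * (∫ y, ‖gradient φ y‖ ^ p) ^ (1 / p)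
                  + C * (∫ y, |φ y| ^ q) ^ (1 / q) := by
  have hp1 : (1:ℝ) < p := lt_of_le_of_lt (by exact_mod_cast hN) hp
  have hp0 : 0 < p := lt_trans one_pos hp1
  have hpN : (0:ℝ) < p - N := by linarith
  set ω := (volume (Metric.ball (0 : EuclideanSpace ℝ (Fin N)) 1)).toReal with hω
  have hω_pos : 0 < ω := by
    refine ENNReal.toReal_pos ?_ measure_ball_lt_top.ne
    exact (Metric.measure_ball_pos volume _ one_pos).ne'
  set C1 : ℝ := ω⁻¹ * (ω ^ (1 - 1/p) * (p / (p - N))) with hC1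
  set C2 : ℝ := ω⁻¹ * max 1 ω with hC2
  have hC1_0 : 0 ≤ C1 := by
    apply mul_nonneg (inv_nonneg.2 hω_pos.le)
    exact mul_nonneg (Real.rpow_nonneg hω_pos.le _) (div_pos hp0 hpN).le
  have hC2_0 : 0 < C2 := by
    apply mul_pos (inv_pos.2 hω_pos)
    exact lt_max_of_lt_left one_pos
  refine ⟨C1 + C2, by linarith, ?_⟩
  intro q hq φ hφ hφc x
  have hgradnorm : ∀ y, ‖gradient φ y‖ = ‖fderiv ℝ φ y‖ := fun y =>
    LinearIsometryEquiv.norm_map _ _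
  have hgradint : (∫ y, ‖gradient φ y‖ ^ p) = ∫ y, ‖fderiv ℝ φ y‖ ^ p := by
    simp_rw [hgradnorm]
  set Sg := ∫ z, ‖fderiv ℝ φ z‖ ^ p with hSg
  have hSg0 : 0 ≤ Sg := integral_nonneg fun z => Real.rpow_nonneg (norm_nonneg _) p
  set Sq := ∫ y, |φ y| ^ q with hSq
  have hSq0 : 0 ≤ Sq := integral_nonneg fun y => Real.rpow_nonneg (abs_nonneg _) q
  set B := Metric.ball x 1 with hB
  haveI : IsFiniteMeasure (volume.restrict B) :=
    ⟨by simpa [Measure.restrict_apply_univ] using measure_ball_lt_top⟩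
  have hvolB : (volume B).toReal = ω := by
    rw [hω, hB, Measure.addHaar_ball_center]
  have hφ_int : Integrable φ := hφ.continuous.integrable_of_hasCompactSupport hφc
  have h1 : ∫ y in B, (φ x - φ y) = ω * φ x - ∫ y in B, φ y := by
    rw [integral_sub (integrable_const _) hφ_int.restrict, integral_const,
      measureReal_restrict_apply_univ, measureReal_def, hvolB, smul_eq_mul]
  have h2 : ω * φ x = (∫ y in B, (φ x - φ y)) + ∫ y in B, φ y := by
    rw [h1]; ring
  have habs1 : |∫ y in B, (φ x - φ y)| ≤ ∫ y in B, |φ x - φ y| := by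
    simpa [Real.norm_eq_abs] using
      norm_integral_le_integral_norm (μ := volume.restrict B) (fun y => φ x - φ y)
  have habs2 : |∫ y in B, φ y| ≤ ∫ y in B, |φ y| := by
    simpa [Real.norm_eq_abs] using
      norm_integral_le_integral_norm (μ := volume.restrict B) φ
  have hmain : ω * |φ x| ≤ (∫ y in B, |φ x - φ y|) + ∫ y in B, |φ y| := by
    calc ω * |φ x| = |ω * φ x| := by
          rw [abs_mul, abs_of_pos hω_pos]
      _ = |(∫ y in B, (φ x - φ y)) + ∫ y in B, φ y| := by rw [h2]
      _ ≤ |∫ y in B, (φ x - φ y)| + |∫ y in B, φ y| := abs_add_le _ _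
      _ ≤ (∫ y in B, |φ x - φ y|) + ∫ y in B, |φ y| := add_le_add habs1 habs2
  have hgrad := aux_gradterm hN hp φ hφ hφc x
  have hqterm := aux_qterm hq φ hφ.continuous hφc x
  have hfinal : ω * |φ x| ≤ ω * (C1 * Sg ^ (1/p)) + ω * (C2 * Sq ^ (1/q)) := by
    have e1 : ω * (C1 * Sg ^ (1/p)) = ω ^ (1 - 1/p) * Sg ^ (1/p) * (p / (p - N)) := by
      rw [hC1]; field_simp
    have e2 : ω * (C2 * Sq ^ (1/q)) = max 1 ω * Sq ^ (1/q) := by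
      rw [hC2]; field_simp
    rw [e1, e2]
    calc ω * |φ x| ≤ (∫ y in B, |φ x - φ y|) + ∫ y in B, |φ y| := hmain
      _ ≤ ω ^ (1 - 1/p) * Sg ^ (1/p) * (p / (p - N)) + max 1 ω * Sq ^ (1/q) := by
          apply add_le_add
          · simpa [hω, hSg] using hgrad
          · simpa [hω, hSq] using hqterm
  have hx : |φ x| ≤ C1 * Sg ^ (1/p) + C2 * Sq ^ (1/q) := by
    have := hfinal
    nlinarith [hω_pos]
  calc |φ x| ≤ C1 * Sg ^ (1/p) + C2 * Sq ^ (1/q) := hx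
    _ ≤ (C1 + C2) * Sg ^ (1/p) + (C1 + C2) * Sq ^ (1/q) := by
        apply add_le_add
        · apply mul_le_mul_of_nonneg_right (by linarith) (Real.rpow_nonneg hSg0 _)
        · apply mul_le_mul_of_nonneg_right (by linarith) (Real.rpow_nonneg hSq0 _)
    _ = (C1 + C2) * (∫ y, ‖gradient φ y‖ ^ p) ^ (1 / p)
        + (C1 + C2) * (∫ y, |φ y| ^ q) ^ (1 / q) := by
        rw [hgradint]
end
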